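/- Define C : ℝ → ℝ by C(w) = ((−27w + √(27·(4 + 27w²)))/2)^(1/3) (real cube root) and V : ℝ → ℝ by V(w) = 1/C(w) − C(w)/3. Let v₁, v₂ be real numbers and set w₁ = v₁·(1 + v₁²), w₂ = v₂·(1 + v₂²), v₃ = v₁ + (1 − v₁²)·v₂, and w₃ = v₃·(1 + v₃²). Then w₃ = (V(w₁) + (1 − V(w₁)²)·V(w₂)) · (1 + (V(w₁) + (1 − V(w₁)²)·V(w₂))²). -/

import Mathlib

noncomputable def cubeC (w : ℝ) : ℝ :=
  ((-27 * w + Real.sqrt (27 * (4 + 27 * w ^ 2))) / 2) ^ ((1 : ℝ) / 3)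

noncomputable def hubbleOfFermi (w : ℝ) : ℝ :=
  1 / cubeC w - cubeC w / 3

/-!
Cardano: with `C = cubeC w`, `A = C³` is the positive root of `A² + 27 w A = 27`, which is exactly
what makes `V = 1/C - C/3` a root of the depressed cubic `V³ + V = w`. Since `v ↦ v³ + v` is strictly
increasing, `hubbleOfFermi` inverts `v ↦ v (1 + v²)`, so each `hubbleOfFermi wᵢ` is just `vᵢ`.
-/

noncomputable def cardanoRadicand (w : ℝ) : ℝ :=
  (-27 * w + Real.sqrt (27 * (4 + 27 * w ^ 2))) / 2

lemma cardanoRadicand_pos (w : ℝ) : 0 < cardanoRadicand w := by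
  have hs : Real.sqrt (27 * (4 + 27 * w ^ 2)) ^ 2 = 27 * (4 + 27 * w ^ 2) :=
    Real.sq_sqrt (by positivity)
  have hs₀ := Real.sqrt_nonneg (27 * (4 + 27 * w ^ 2))
  unfold cardanoRadicand
  nlinarith

lemma cardanoRadicand_sq_add (w : ℝ) :
    cardanoRadicand w ^ 2 + 27 * w * cardanoRadicand w = 27 := by
  have hs : Real.sqrt (27 * (4 + 27 * w ^ 2)) ^ 2 = 27 * (4 + 27 * w ^ 2) :=
    Real.sq_sqrt (by positivity)
  unfold cardanoRadicand
  linear_combination hs / 4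

lemma cubeC_eq_cardanoRadicand_rpow (w : ℝ) : cubeC w = cardanoRadicand w ^ ((1 : ℝ) / 3) := rfl

lemma cubeC_pos (w : ℝ) : 0 < cubeC w :=
  Real.rpow_pos_of_pos (cardanoRadicand_pos w) _

lemma cubeC_pow_three (w : ℝ) : cubeC w ^ 3 = cardanoRadicand w := by
  rw [← Real.rpow_natCast, cubeC_eq_cardanoRadicand_rpow,
    ← Real.rpow_mul (cardanoRadicand_pos w).le]
  norm_num

theorem hubbleOfFermi_pow_three_add_self (w : ℝ) : hubbleOfFermi w ^ 3 + hubbleOfFermi w = w := by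
  have hA := cardanoRadicand_sq_add w
  rw [← cubeC_pow_three] at hA
  have hC := (cubeC_pos w).ne'
  unfold hubbleOfFermi
  field_simp
  linear_combination -hA

lemma strictMono_pow_three_add_self : StrictMono fun x : ℝ => x ^ 3 + x :=
  (Odd.strictMono_pow (by decide)).add strictMono_id

theorem hubbleOfFermi_mul_one_add_sq (v : ℝ) : hubbleOfFermi (v * (1 + v ^ 2)) = v :=
  strictMono_pow_three_add_self.injective <| by
    simp only [hubbleOfFermi_pow_three_add_self]
    ring

theorem fermi_velocity_addition_power_third
    (v₁ v₂ : ℝ) (w₁ w₂ v₃ w₃ : ℝ)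
    (hw₁ : w₁ = v₁ * (1 + v₁ ^ 2))
    (hw₂ : w₂ = v₂ * (1 + v₂ ^ 2))
    (hv₃ : v₃ = v₁ + (1 - v₁ ^ 2) * v₂)
    (hw₃ : w₃ = v₃ * (1 + v₃ ^ 2)) :
    w₃ = (hubbleOfFermi w₁ + (1 - (hubbleOfFermi w₁) ^ 2) * hubbleOfFermi w₂) *
      (1 + (hubbleOfFermi w₁ + (1 - (hubbleOfFermi w₁) ^ 2) * hubbleOfFermi w₂) ^ 2) := by
  subst hw₁ hw₂ hv₃ hw₃
  rw [hubbleOfFermi_mul_one_add_sq, hubbleOfFermi_mul_one_add_sq]
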